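/- arXiv:2604.13976 — 3 statements merged into one kernel-verified Lean document; each statement's English description precedes it below -/
import Mathlib

section
/- For Λ > 0 and M > 0 with 3M√Λ < 1, the number r₀ = (2/√Λ)·sin((1/3)·arcsin(3M√Λ)) satisfies 1 − 2M/r₀ − (Λ/3)r₀² = 0, i.e. it is a root of the cubic (Λ/3)r³ − r + 2M = 0. -/
/-- For Λ > 0 and M > 0 with 3M√Λ < 1, the radius
r₀ = (2/√Λ)·sin((1/3)·arcsin(3M√Λ)) satisfies 1 − 2M/r₀ − (Λ/3)r₀² = 0. -/
theorem sds_inner_horizon (Λ M : ℝ) (hΛ : 0 < Λ) (hM : 0 < M)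
    (hlt : 3 * M * Real.sqrt Λ < 1) :
    1 - 2 * M / ((2 / Real.sqrt Λ) * Real.sin ((1/3) * Real.arcsin (3 * M * Real.sqrt Λ)))
      - (Λ / 3) * ((2 / Real.sqrt Λ) * Real.sin ((1/3) * Real.arcsin (3 * M * Real.sqrt Λ)))^2
      = 0 := by
  have hL : 0 < Real.sqrt Λ := Real.sqrt_pos.mpr hΛ
  set a : ℝ := 3 * M * Real.sqrt Λ with ha
  have ha0 : 0 < a := by positivity
  set θ : ℝ := (1/3) * Real.arcsin a with hθ
  have h3θ : Real.sin (3 * θ) = a := by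
    have : 3 * θ = Real.arcsin a := by rw [hθ]; ring
    rw [this, Real.sin_arcsin (by linarith) (le_of_lt hlt)]
  have hθpos : 0 < θ := by
    have := Real.arcsin_pos.mpr ha0
    rw [hθ]; linarith
  have hθlt : θ < Real.pi := by
    have h1 := Real.arcsin_le_pi_div_two a
    have h2 := Real.pi_pos
    rw [hθ]; nlinarith
  have hs : 0 < Real.sin θ := Real.sin_pos_of_pos_of_lt_pi hθpos hθlt
  have hsin3 : 3 * Real.sin θ - 4 * (Real.sin θ)^3 = a := by
    rw [← h3θ, Real.sin_three_mul]
  have hL2 : Real.sqrt Λ ^ 2 = Λ := Real.sq_sqrt hΛ.le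
  have hsne : Real.sin θ ≠ 0 := hs.ne'
  have hLne : Real.sqrt Λ ≠ 0 := hL.ne'
  field_simp
  nlinarith [hsin3, hL2, sq_nonneg (Real.sin θ), hs, hL, mul_pos hs hL]
end

section
/- Let T : (0, r₀] → (0,∞) be differentiable satisfying d(ln T)/dr = 1/(2r) − 4πr²P(r)/M₀ where M₀ > 0 and 0 ≤ P(r) ≤ C·r^{−3+δ} for some constants C > 0, δ > 0. Then T(r)/√r converges to a finite positive limit as r → 0⁺. -/
open Real in
/-- Lemma 3 of the paper: if d(ln T)/dr = 1/(2r) − 4πr²P/M₀ with M₀ > 0 and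
0 ≤ P(r) ≤ C r^{−3+δ}, then T(r)/√r converges to a finite positive limit as r → 0⁺. -/
theorem temperature_sqrt_behavior (T P : ℝ → ℝ) (r₀ M₀ C δ : ℝ)
    (hr₀ : 0 < r₀) (hM₀ : 0 < M₀) (hC : 0 < C) (hδ : 0 < δ)
    (hTpos : ∀ r ∈ Set.Ioc 0 r₀, 0 < T r)
    (hT : ∀ r ∈ Set.Ioc 0 r₀, HasDerivAt T
      (T r * (1 / (2 * r) - 4 * π * r^2 * P r / M₀)) r)
    (hP : ∀ r ∈ Set.Ioc 0 r₀, 0 ≤ P r ∧ P r ≤ C * r ^ (-3 + δ)) :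
    ∃ L : ℝ, 0 < L ∧
      Filter.Tendsto (fun r => T r / Real.sqrt r)
        (nhdsWithin 0 (Set.Ioi 0)) (nhds L) := by
  set f : ℝ → ℝ := fun r => Real.log (T r) - Real.log r / 2 with hfdef
  set c : ℝ := 4 * π * C / (M₀ * δ) with hcdef
  have hcpos : 0 < c := by
    apply div_pos (by positivity) (by positivity)
  set h : ℝ → ℝ := fun r => f r + c * r ^ δ with hhdef
  -- derivative of f
  have hfderiv : ∀ r ∈ Set.Ioc 0 r₀,
      HasDerivAt f (-(4 * π * r ^ 2 * P r / M₀)) r := by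
    intro r hr
    have hTne : T r ≠ 0 := (hTpos r hr).ne'
    have h1 : HasDerivAt (fun s => Real.log (T s))
        ((T r * (1 / (2 * r) - 4 * π * r ^ 2 * P r / M₀)) / T r) r :=
      (hT r hr).log hTne
    have h2 : HasDerivAt (fun s => Real.log s / 2) (r⁻¹ / 2) r :=
      (Real.hasDerivAt_log hr.1.ne').div_const 2
    have := h1.sub h2
    refine this.congr_deriv ?_
    rw [mul_div_cancel_left₀ _ hTne]
    field_simp [hr.1.ne']
    ring
  -- derivative of h
  have hhderiv : ∀ r ∈ Set.Ioc 0 r₀,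
      HasDerivAt h (-(4 * π * r ^ 2 * P r / M₀) + c * (δ * r ^ (δ - 1))) r := by
    intro r hr
    have h1 : HasDerivAt (fun s : ℝ => s ^ δ) (δ * r ^ (δ - 1)) r :=
      Real.hasDerivAt_rpow_const (Or.inl hr.1.ne')
    exact (hfderiv r hr).add ((h1.const_mul c))
  -- derivative of h is nonneg
  have hhd_nonneg : ∀ r ∈ Set.Ioc 0 r₀,
      0 ≤ -(4 * π * r ^ 2 * P r / M₀) + c * (δ * r ^ (δ - 1)) := by
    intro r hr
    have hr0 : (0:ℝ) < r := hr.1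
    have hPle := (hP r hr).2
    have key : r ^ 2 * P r ≤ C * r ^ (δ - 1) := by
      have : r ^ 2 * P r ≤ r ^ 2 * (C * r ^ (-3 + δ)) := by
        apply mul_le_mul_of_nonneg_left hPle (by positivity)
      refine this.trans (le_of_eq ?_)
      rw [show (r:ℝ) ^ 2 = r ^ (2:ℝ) by rw [← Real.rpow_natCast r 2]; norm_num]
      rw [← mul_assoc, mul_comm (r ^ (2:ℝ)) C, mul_assoc, ← Real.rpow_add hr0]
      congr 1
      ring
    have hcδ : c * δ = 4 * π * C / M₀ := by
      rw [hcdef]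
      field_simp
    have : 4 * π * r ^ 2 * P r / M₀ ≤ 4 * π * C / M₀ * r ^ (δ - 1) := by
      rw [div_le_iff₀ hM₀] at *
      calc 4 * π * r ^ 2 * P r = 4 * π * (r ^ 2 * P r) := by ring
        _ ≤ 4 * π * (C * r ^ (δ - 1)) := by
            apply mul_le_mul_of_nonneg_left key (by positivity)
        _ = 4 * π * C / M₀ * r ^ (δ - 1) * M₀ := by field_simp
    nlinarith [this, hcδ, Real.rpow_nonneg hr0.le (δ - 1)]
  -- f is antitone on Ioo 0 r₀
  have hIoo : Set.Ioo (0:ℝ) r₀ ⊆ Set.Ioc 0 r₀ := Set.Ioo_subset_Ioc_self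
  have hint : interior (Set.Ioo (0:ℝ) r₀) = Set.Ioo 0 r₀ := interior_Ioo
  have hfanti : AntitoneOn f (Set.Ioo 0 r₀) := by
    apply antitoneOn_of_deriv_nonpos (convex_Ioo 0 r₀)
    · exact fun r hr => (hfderiv r (hIoo hr)).continuousAt.continuousWithinAt
    · rw [hint]
      exact fun r hr => (hfderiv r (hIoo hr)).differentiableAt.differentiableWithinAt
    · rw [hint]
      intro r hr
      rw [(hfderiv r (hIoo hr)).deriv]
      have := (hP r (hIoo hr)).1
      have : 0 ≤ 4 * π * r ^ 2 * P r / M₀ := by positivity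
      linarith
  -- h is monotone on Ioc 0 r₀
  have hhmono : MonotoneOn h (Set.Ioc 0 r₀) := by
    apply monotoneOn_of_deriv_nonneg (convex_Ioc 0 r₀)
    · exact fun r hr => (hhderiv r hr).continuousAt.continuousWithinAt
    · rw [interior_Ioc]
      exact fun r hr => (hhderiv r (hIoo hr)).differentiableAt.differentiableWithinAt
    · rw [interior_Ioc]
      intro r hr
      rw [(hhderiv r (hIoo hr)).deriv]
      exact hhd_nonneg r (hIoo hr)
  -- f is bounded above on Ioo 0 r₀ by h r₀
  have hbdd : BddAbove (f '' Set.Ioo 0 r₀) := by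
    refine ⟨h r₀, ?_⟩
    rintro y ⟨r, hr, rfl⟩
    have h1 : f r ≤ h r := by
      have : 0 ≤ c * r ^ δ := mul_nonneg hcpos.le (Real.rpow_nonneg hr.1.le δ)
      simp only [hhdef]; linarith
    have h2 : h r ≤ h r₀ := hhmono (hIoo hr) ⟨hr₀, le_refl r₀⟩ hr.2.le
    exact h1.trans h2
  -- limit of f
  have hne : (Set.Ioo (0:ℝ) r₀).Nonempty := Set.nonempty_Ioo.2 hr₀
  have hflim : Filter.Tendsto f (nhdsWithin 0 (Set.Ioi 0))
      (nhds (sSup (f '' Set.Ioo 0 r₀))) := by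
    exact AntitoneOn.tendsto_nhdsWithin_Ioo_right hne hfanti hbdd
  refine ⟨Real.exp (sSup (f '' Set.Ioo 0 r₀)), Real.exp_pos _, ?_⟩
  have hexp : Filter.Tendsto (fun r => Real.exp (f r)) (nhdsWithin 0 (Set.Ioi 0))
      (nhds (Real.exp (sSup (f '' Set.Ioo 0 r₀)))) :=
    (Real.continuous_exp.continuousAt).tendsto.comp hflim
  apply hexp.congr'
  filter_upwards [Filter.inter_mem self_mem_nhdsWithin
    (nhdsWithin_le_nhds (Iio_mem_nhds hr₀))] with r hr
  obtain ⟨hr1, hr2⟩ := hr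
  have hr1' : (0:ℝ) < r := hr1
  have hrIoc : r ∈ Set.Ioc 0 r₀ := ⟨hr1', le_of_lt hr2⟩
  have hTr := hTpos r hrIoc
  rw [hfdef]
  simp only
  rw [Real.exp_sub, Real.exp_log hTr]
  congr 1
  rw [Real.sqrt_eq_rpow, Real.rpow_def_of_pos hr1']
  ring_nf
end

section
/- Let φ(r) = m(r) + 4πr³P(r) − Λr³/3 with Λ < 0, where m' = 4πr²ρ, and P satisfies the TOV-Λ equation so that d(ln T)/dr = −φ(r)/(r²(1 − 2m/r − Λr²/3)) with the denominator positive, and dP/dr = (ρ+P)·d(ln T)/dr, with ρ ≥ 0, P ≥ 0, ρ + P ≥ 0. Then φ' (r) = 4πr²(ρ + 3P) − Λr² + 4πr³(ρ+P)·d(ln T)/dr, and on any interval where φ ≤ 0 one has φ' > 0; consequently φ, and hence dT/dr, has at most one zero. -/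
open Filter Set Topology

private lemma slope_left_of_pos {f : ℝ → ℝ} {d c : ℝ} (h : HasDerivAt f d c) (hd : 0 < d) :
    ∀ᶠ x in 𝓝[<] c, f x < f c := by
  have h1 : Tendsto (slope f c) (𝓝[≠] c) (𝓝 d) := hasDerivAt_iff_tendsto_slope.1 h
  have h2 : ∀ᶠ x in 𝓝[≠] c, 0 < slope f c x := h1.eventually (eventually_gt_nhds hd)
  have h3 : 𝓝[<] c ≤ 𝓝[≠] c := nhdsWithin_mono _ (fun x hx => ne_of_lt hx)
  filter_upwards [h3 h2, self_mem_nhdsWithin] with x hx hx'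
  rw [slope_def_field] at hx
  rcases div_pos_iff.1 hx with ⟨h4, h5⟩ | ⟨h4, h5⟩
  · exfalso; simp only [mem_Iio] at hx'; linarith
  · linarith

private lemma slope_right_of_pos {f : ℝ → ℝ} {d c : ℝ} (h : HasDerivAt f d c) (hd : 0 < d) :
    ∀ᶠ x in 𝓝[>] c, f c < f x := by
  have h1 : Tendsto (slope f c) (𝓝[≠] c) (𝓝 d) := hasDerivAt_iff_tendsto_slope.1 h
  have h2 : ∀ᶠ x in 𝓝[≠] c, 0 < slope f c x := h1.eventually (eventually_gt_nhds hd)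
  have h3 : 𝓝[>] c ≤ 𝓝[≠] c := nhdsWithin_mono _ (fun x hx => ne_of_gt hx)
  filter_upwards [h3 h2, self_mem_nhdsWithin] with x hx hx'
  rw [slope_def_field] at hx
  rcases div_pos_iff.1 hx with ⟨h4, h5⟩ | ⟨h4, h5⟩
  · linarith
  · exfalso; simp only [mem_Ioi] at hx'; linarith

open Real in
/-- Lemma 5 of the paper: for Λ < 0, with φ(r) = m + 4πr³P − Λr³/3 governing the
sign of dT/dr, one has the stated formula for φ', φ' > 0 wherever φ ≤ 0, and
consequently φ has at most one zero. -/
theorem phi_at_most_one_zero (Λ : ℝ) (hΛ : Λ < 0) (m P ρ : ℝ → ℝ)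
    (hden : ∀ r : ℝ, 0 < r → 0 < r^2 * (1 - 2 * m r / r - Λ * r^2 / 3))
    (hm : ∀ r : ℝ, 0 < r → HasDerivAt m (4 * π * r^2 * ρ r) r)
    (hP : ∀ r : ℝ, 0 < r → HasDerivAt P
      ((ρ r + P r) *
        (-((m r + 4 * π * r^3 * P r - Λ * r^3 / 3) /
          (r^2 * (1 - 2 * m r / r - Λ * r^2 / 3))))) r)
    (hρpos : ∀ r : ℝ, 0 < r → 0 ≤ ρ r)
    (hPpos : ∀ r : ℝ, 0 < r → 0 ≤ P r)
    (hsum : ∀ r : ℝ, 0 < r → 0 ≤ ρ r + P r) :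
    (∀ r : ℝ, 0 < r →
      HasDerivAt (fun s => m s + 4 * π * s^3 * P s - Λ * s^3 / 3)
        (4 * π * r^2 * (ρ r + 3 * P r) - Λ * r^2 +
          4 * π * r^3 * (ρ r + P r) *
            (-((m r + 4 * π * r^3 * P r - Λ * r^3 / 3) /
              (r^2 * (1 - 2 * m r / r - Λ * r^2 / 3))))) r) ∧
    (∀ r : ℝ, 0 < r → m r + 4 * π * r^3 * P r - Λ * r^3 / 3 ≤ 0 →
      0 < deriv (fun s => m s + 4 * π * s^3 * P s - Λ * s^3 / 3) r) ∧
    (∀ r₁ r₂ : ℝ, 0 < r₁ → 0 < r₂ →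
      m r₁ + 4 * π * r₁^3 * P r₁ - Λ * r₁^3 / 3 = 0 →
      m r₂ + 4 * π * r₂^3 * P r₂ - Λ * r₂^3 / 3 = 0 → r₁ = r₂) := by
  set φ : ℝ → ℝ := fun s => m s + 4 * π * s^3 * P s - Λ * s^3 / 3 with hφdef
  have key : ∀ r : ℝ, 0 < r →
      HasDerivAt φ
        (4 * π * r^2 * (ρ r + 3 * P r) - Λ * r^2 +
          4 * π * r^3 * (ρ r + P r) *
            (-((m r + 4 * π * r^3 * P r - Λ * r^3 / 3) /
              (r^2 * (1 - 2 * m r / r - Λ * r^2 / 3))))) r := by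
    intro r hr
    have h1 := hm r hr
    have h2 := hP r hr
    have h3 : HasDerivAt (fun s : ℝ => 4 * π * s^3) (4 * π * (3 * r^2)) r := by
      simpa using HasDerivAt.const_mul (4 * π) (hasDerivAt_pow 3 r)
    have h4 := h3.mul h2
    have h5 : HasDerivAt (fun s : ℝ => Λ * s^3 / 3) (Λ * (3 * r^2) / 3) r := by
      simpa using (HasDerivAt.const_mul Λ (hasDerivAt_pow 3 r)).div_const 3
    have h6 := (h1.add h4).sub h5
    exact h6.congr_deriv (by ring)
  have keypos : ∀ r : ℝ, 0 < r → φ r ≤ 0 → 0 < deriv φ r := by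
    intro r hr hφr
    rw [(key r hr).deriv]
    have hden' := hden r hr
    have t1 : 0 ≤ 4 * π * r^2 * (ρ r + 3 * P r) :=
      mul_nonneg (by positivity) (by have := hρpos r hr; have := hPpos r hr; linarith)
    have t2 : 0 < -(Λ * r^2) := by
      have : 0 < (-Λ) * r^2 := mul_pos (neg_pos.2 hΛ) (by positivity)
      linarith
    have t3 : 0 ≤ 4 * π * r^3 * (ρ r + P r) *
        (-((m r + 4 * π * r^3 * P r - Λ * r^3 / 3) /
          (r^2 * (1 - 2 * m r / r - Λ * r^2 / 3)))) := by
      apply mul_nonneg (mul_nonneg (by positivity) (hsum r hr))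
      rw [neg_nonneg]
      exact div_nonpos_of_nonpos_of_nonneg hφr hden'.le
    linarith
  have Hd : ∀ r : ℝ, 0 < r → φ r ≤ 0 →
      HasDerivAt φ (deriv φ r) r ∧ 0 < deriv φ r :=
    fun r hr hφr => ⟨(key r hr).differentiableAt.hasDerivAt, keypos r hr hφr⟩
  refine ⟨key, keypos, ?_⟩
  have nod : ∀ a b : ℝ, 0 < a → a < b → φ a = 0 → φ b = 0 → False := by
    intro a b ha hab hfa hfb
    have hb : 0 < b := ha.trans hab
    obtain ⟨Ha, hda⟩ := Hd a ha hfa.le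
    -- find a' ∈ (a,b) with φ a' > 0
    have hIoo : Ioo a b ∈ 𝓝[>] a := Ioo_mem_nhdsGT_of_mem ⟨le_refl a, hab⟩
    obtain ⟨a', hφa', ha'ab⟩ :=
      ((slope_right_of_pos Ha hda).and (eventually_of_mem hIoo (fun x hx => hx))).exists
    rw [hfa] at hφa'
    have ha'0 : 0 < a' := ha.trans ha'ab.1
    -- the set where φ ≤ 0 inside [a', b]
    set S : Set ℝ := Icc a' b ∩ φ ⁻¹' (Iic 0) with hSdef
    have hcont : ContinuousOn φ (Icc a' b) := fun x hx =>
      ((key x (lt_of_lt_of_le ha'0 hx.1)).continuousAt).continuousWithinAt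
    have hSclosed : IsClosed S :=
      hcont.preimage_isClosed_of_isClosed isClosed_Icc isClosed_Iic
    have hbS : b ∈ S := ⟨⟨ha'ab.2.le, le_refl b⟩, by simp [hfb]⟩
    have hbdd : BddBelow S := ⟨a', fun x hx => hx.1.1⟩
    set c : ℝ := sInf S with hcdef
    have hcS : c ∈ S := hSclosed.csInf_mem ⟨b, hbS⟩ hbdd
    have hc0 : 0 < c := lt_of_lt_of_le ha'0 hcS.1.1
    have ha'c : a' < c := by
      rcases lt_or_eq_of_le hcS.1.1 with h | h
      · exact h
      · exfalso; have := hcS.2; rw [← h] at this; simp only [mem_preimage, mem_Iic] at this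
        linarith
    have hleft : ∀ x, a' ≤ x → x < c → 0 < φ x := by
      intro x hx1 hx2
      by_contra hcon
      push_neg at hcon
      have : x ∈ S := ⟨⟨hx1, hx2.le.trans hcS.1.2⟩, hcon⟩
      exact absurd (csInf_le hbdd this) (not_le.2 hx2)
    obtain ⟨Hc, hdc⟩ := Hd c hc0 hcS.2
    have hIoo2 : Ioo a' c ∈ 𝓝[<] c := Ioo_mem_nhdsLT_of_mem ⟨ha'c, le_refl c⟩
    obtain ⟨x, hx1, hx2⟩ :=
      ((slope_left_of_pos Hc hdc).and (eventually_of_mem hIoo2 (fun x hx => hx))).exists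
    have := hleft x hx2.1.le hx2.2
    have hφc : φ c ≤ 0 := hcS.2
    linarith
  intro r₁ r₂ h1 h2 hz1 hz2
  rcases lt_trichotomy r₁ r₂ with h | h | h
  · exact absurd (nod r₁ r₂ h1 h hz1 hz2) not_false
  · exact h
  · exact absurd (nod r₂ r₁ h2 h hz2 hz1) not_false
end
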